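/- arXiv:1901.09978 — 2 statements merged into one kernel-verified Lean document; each statement's English description precedes it below -/
import Mathlib

section
/- Every element of the symmetric group S_n, generated by the simple transpositions r₁, …, r_{n−1}, admits a reduced expression containing at most one occurrence of the generator r₁. -/
open Equiv Finset

/-- The simple transposition `r_{i+1} = (i+1, i+2)` of `{1, …, n+1}`, i.e. the adjacent
transposition `Equiv.swap i.castSucc i.succ` in `Equiv.Perm (Fin (n+1))`. -/
def simpleTransposition (n : ℕ) (i : Fin n) : Equiv.Perm (Fin (n + 1)) :=
  Equiv.swap i.castSucc i.succ

section
variable {n : ℕ}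


lemma swap_lt_iff (i : Fin n) (c d : Fin (n+1)) (hcd : c ≠ d) :
    (Equiv.swap i.castSucc i.succ d < Equiv.swap i.castSucc i.succ c ↔
      ((c < d ∧ c = i.castSucc ∧ d = i.succ) ∨ (d < c ∧ ¬(d = i.castSucc ∧ c = i.succ)))) := by
  have hab : (i.castSucc : Fin (n+1)).val + 1 = (i.succ : Fin (n+1)).val := rfl
  have hcd' : c.val ≠ d.val := fun h => hcd (Fin.ext h)
  simp only [Equiv.swap_apply_def, Fin.lt_def, Fin.ext_iff]
  split_ifs <;> simp -failIfUnchanged only [Fin.lt_def, Fin.ext_iff] at * <;> omega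

def invSet (σ : Equiv.Perm (Fin (n+1))) : Finset (Fin (n+1) × Fin (n+1)) :=
  Finset.univ.filter (fun p => p.1 < p.2 ∧ σ p.2 < σ p.1)

def invCount (σ : Equiv.Perm (Fin (n+1))) : ℕ := (invSet σ).card

lemma mul_apply' (i : Fin n) (τ : Equiv.Perm (Fin (n+1))) (x : Fin (n+1)) :
    (simpleTransposition n i * τ) x = Equiv.swap i.castSucc i.succ (τ x) := rfl

lemma invCount_mul_le (i : Fin n) (τ : Equiv.Perm (Fin (n+1))) :
    invCount (simpleTransposition n i * τ) ≤ invCount τ + 1 := by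
  have hsub : invSet (simpleTransposition n i * τ) ⊆
      insert (τ⁻¹ i.castSucc, τ⁻¹ i.succ) (invSet τ) := by
    intro p hp
    simp only [invSet, mem_filter, mem_univ, true_and] at hp
    simp only [mul_apply'] at hp
    obtain ⟨h1, h2⟩ := hp
    have hne : τ p.1 ≠ τ p.2 := fun h => absurd (τ.injective h) (ne_of_lt h1)
    rcases (swap_lt_iff i (τ p.1) (τ p.2) hne).1 h2 with ⟨_, hc, hd⟩ | ⟨hlt, _⟩
    · have e1 : p.1 = τ⁻¹ i.castSucc := by rw [← hc]; simp
      have e2 : p.2 = τ⁻¹ i.succ := by rw [← hd]; simp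
      rw [mem_insert]; left; rw [← e1, ← e2]
    · exact mem_insert_of_mem (by simp [invSet, h1, hlt])
  calc invCount (simpleTransposition n i * τ) ≤ _ := card_le_card hsub
    _ ≤ invCount τ + 1 := card_insert_le _ _

lemma invCount_step (i : Fin n) (τ : Equiv.Perm (Fin (n+1))) (x y : Fin (n+1))
    (hxy : x < y) (hx : τ x = i.succ) (hy : τ y = i.castSucc) :
    invCount τ = invCount (simpleTransposition n i * τ) + 1 := by
  have hmem : (x, y) ∈ invSet τ := by
    simp only [invSet, mem_filter, mem_univ, true_and]
    exact ⟨hxy, by rw [hx, hy]; exact Fin.castSucc_lt_succ (i := i)⟩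
  have hset : invSet (simpleTransposition n i * τ) = (invSet τ).erase (x, y) := by
    ext p
    simp only [invSet, mem_filter, mem_univ, true_and, mem_erase]
    simp only [mul_apply']
    constructor
    · rintro ⟨h1, h2⟩
      have hne : τ p.1 ≠ τ p.2 := fun h => absurd (τ.injective h) (ne_of_lt h1)
      rcases (swap_lt_iff i (τ p.1) (τ p.2) hne).1 h2 with ⟨_, hc, hd⟩ | ⟨hlt, hn2⟩
      · -- τ p.1 = i.castSucc = τ y, τ p.2 = i.succ = τ x ⇒ p.1 = y, p.2 = x, contra order
        have e1 : p.1 = y := τ.injective (by rw [hc, hy])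
        have e2 : p.2 = x := τ.injective (by rw [hd, hx])
        rw [e1, e2] at h1
        exact absurd (h1.trans hxy) (lt_irrefl _)
      · refine ⟨fun hp => ?_, h1, hlt⟩
        rw [hp] at hn2
        exact hn2 ⟨hy, hx⟩
    · rintro ⟨hp, h1, h2⟩
      refine ⟨h1, ?_⟩
      have hne : τ p.1 ≠ τ p.2 := fun h => absurd (τ.injective h) (ne_of_lt h1)
      refine (swap_lt_iff i (τ p.1) (τ p.2) hne).2 (Or.inr ⟨h2, fun ⟨e1, e2⟩ => ?_⟩)
      exact hp (Prod.ext (τ.injective (e2.trans hx.symm)) (τ.injective (e1.trans hy.symm)))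
  have hpos : 0 < (invSet τ).card := card_pos.2 ⟨_, hmem⟩
  rw [invCount, invCount, hset, card_erase_of_mem hmem]
  omega

lemma invCount_le_length (l : List (Fin n)) :
    invCount (l.map (simpleTransposition n)).prod ≤ l.length := by
  induction l with
  | nil =>
    simp only [List.map_nil, List.prod_nil, List.length_nil, Nat.le_zero]
    rw [invCount]
    convert Finset.card_empty
    ext p
    simp only [invSet, mem_filter, mem_univ, true_and]
    simp only [Equiv.Perm.one_apply,
      notMem_empty, iff_false, not_and]
    intro h1 h2
    exact absurd (h1.trans h2) (lt_irrefl _)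
  | cons a l ih =>
    simp only [List.map_cons, List.prod_cons, List.length_cons]
    calc invCount (simpleTransposition n a * (l.map (simpleTransposition n)).prod)
        ≤ invCount (l.map (simpleTransposition n)).prod + 1 := invCount_mul_le _ _
      _ ≤ l.length + 1 := by omega

lemma simpleT_sq (i : Fin n) : simpleTransposition n i * simpleTransposition n i = 1 :=
  Equiv.swap_mul_self _ _

lemma key : ∀ (N : ℕ) (σ : Equiv.Perm (Fin (n+1))), invCount σ = N →
    ∀ k : ℕ, (∀ x : Fin (n+1), x.val < k → σ x = x) →
    ∃ l : List (Fin n), (l.map (simpleTransposition n)).prod = σ ∧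
      l.length ≤ invCount σ ∧ (∀ a ∈ l, k ≤ a.val) ∧
      l.countP (fun a => a.val == k) ≤ 1 := by
  intro N
  induction N using Nat.strong_induction_on with
  | _ N IH =>
  intro σ hN k hk
  by_cases h1 : σ = 1
  · exact ⟨[], by simp [h1], by simp, by simp, by simp⟩
  -- least non-fixed point j
  obtain ⟨j, hjS, hjmin⟩ : ∃ j : Fin (n+1), σ j ≠ j ∧ ∀ x : Fin (n+1), x < j → σ x = x := by
    classical
    have hex : ∃ x : Fin (n+1), σ x ≠ x := by
      by_contra h; push_neg at h; exact h1 (Equiv.ext h)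
    have hSne : (Finset.univ.filter (fun x => σ x ≠ x)).Nonempty :=
      ⟨hex.choose, by simp [hex.choose_spec]⟩
    refine ⟨(Finset.univ.filter (fun x => σ x ≠ x)).min' hSne, ?_, ?_⟩
    · have := Finset.min'_mem _ hSne
      simp only [mem_filter, mem_univ, true_and] at this
      exact this
    · intro x hx
      by_contra hc
      exact absurd (Finset.min'_le _ x (by simp [hc])) (not_le.2 hx)
  obtain ⟨m, hm⟩ : ∃ m : Fin (n+1), σ j = m := ⟨σ j, rfl⟩
  have hjm : j < m := by
    rcases lt_trichotomy j m with h | h | h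
    · exact h
    · exact absurd (hm.trans h.symm) hjS
    · have h2 := hjmin m h
      exact absurd (σ.injective (h2.trans hm.symm)) (ne_of_lt h)
  have hjmv : j.val < m.val := hjm
  have hmn : m.val < n + 1 := m.isLt
  have hkj : k ≤ j.val := by
    by_contra hc
    exact hjS (hk j (by omega))
  obtain ⟨i, hival, hisucc⟩ : ∃ i : Fin n, i.val = m.val - 1 ∧ i.succ = m :=
    ⟨⟨m.val - 1, by omega⟩, rfl, Fin.ext (by simp only [Fin.val_succ]; omega)⟩
  have hicast : (i.castSucc : Fin (n+1)).val = m.val - 1 := by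
    rw [Fin.coe_castSucc, hival]
  obtain ⟨y, hσy⟩ : ∃ y : Fin (n+1), σ y = i.castSucc := ⟨σ⁻¹ _, Equiv.apply_symm_apply σ _⟩
  have hjy : j < y := by
    rcases lt_trichotomy j y with h | h | h
    · exact h
    · exfalso
      have : m.val = m.val - 1 := by
        rw [← hicast, ← hσy, ← h, hm]
      omega
    · exfalso
      have h2 := hjmin y h
      have h3 : y.val = m.val - 1 := by rw [← hicast, ← hσy, h2]
      have h4 : y.val < j.val := h
      omega
  have hstep : invCount σ = invCount (simpleTransposition n i * σ) + 1 :=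
    invCount_step i σ j y hjy (by rw [hm, hisucc]) hσy
  have hrecover : simpleTransposition n i * (simpleTransposition n i * σ) = σ := by
    rw [← mul_assoc, simpleT_sq, one_mul]
  have hfixlt : ∀ x : Fin (n+1), x < j → (simpleTransposition n i * σ) x = x := by
    intro x hx
    have hxv : x.val < j.val := hx
    show simpleTransposition n i (σ x) = x
    rw [hjmin x hx, simpleTransposition]
    apply Equiv.swap_apply_of_ne_of_ne
    · intro h; have := congrArg Fin.val h; rw [hicast] at this; omega
    · intro h
      have h2 : x.val = m.val := by rw [h, hisucc]
      omega
  rcases eq_or_lt_of_le (Nat.succ_le_of_lt hjmv) with hcase | hcase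
  · -- m = j + 1
    have hij : i.val = j.val := by omega
    have hfix1 : ∀ x : Fin (n+1), x.val < j.val + 1 → (simpleTransposition n i * σ) x = x := by
      intro x hx
      rcases Nat.lt_or_ge x.val j.val with h | h
      · exact hfixlt x h
      · have hxj : x = j := Fin.ext (by omega)
        rw [hxj]
        show simpleTransposition n i (σ j) = j
        rw [hm, ← hisucc, simpleTransposition, Equiv.swap_apply_right]
        exact Fin.ext (by rw [hicast]; omega)
    obtain ⟨l', hprod', hlen', hge', hcnt'⟩ :=
      IH (invCount (simpleTransposition n i * σ)) (by omega) _ rfl (j.val + 1) hfix1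
    refine ⟨i :: l', ?_, ?_, ?_, ?_⟩
    · rw [List.map_cons, List.prod_cons, hprod', hrecover]
    · simp only [List.length_cons]; omega
    · intro a ha
      rcases List.mem_cons.1 ha with h | h
      · rw [h]; omega
      · have := hge' a h; omega
    · rw [List.countP_cons]
      have hz : l'.countP (fun a => a.val == k) = 0 := by
        rw [List.countP_eq_zero]
        intro a ha
        have := hge' a ha
        simp only [beq_iff_eq]
        omega
      rw [hz]
      split <;> omega
  · -- m > j + 1
    obtain ⟨l', hprod', hlen', hge', hcnt'⟩ :=
      IH (invCount (simpleTransposition n i * σ)) (by omega) _ rfl j.val hfixlt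
    refine ⟨i :: l', ?_, ?_, ?_, ?_⟩
    · rw [List.map_cons, List.prod_cons, hprod', hrecover]
    · simp only [List.length_cons]; omega
    · intro a ha
      rcases List.mem_cons.1 ha with h | h
      · rw [h]; omega
      · have := hge' a h; omega
    · rw [List.countP_cons]
      have hhead : ((i.val == k) = false) := by
        simp only [beq_eq_false_iff_ne, ne_eq]
        omega
      rw [hhead]
      have hcnt2 : l'.countP (fun a => a.val == k) ≤ 1 := by
        rcases eq_or_lt_of_le hkj with heq | hlt
        · rw [heq]; exact hcnt'
        · have hz : l'.countP (fun a => a.val == k) = 0 := by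
            rw [List.countP_eq_zero]
            intro a ha
            have := hge' a ha
            simp only [beq_iff_eq]
            omega
          omega
      simp only [Bool.false_eq_true, if_false, add_zero]
      exact hcnt2

lemma count_eq_countP_val (L : List (Fin n)) (x : Fin n) :
    L.count x = L.countP (fun a => a.val == x.val) := by
  induction L with
  | nil => simp
  | cons a L ih =>
    rw [List.count_cons, List.countP_cons, ih]
    by_cases h : a = x
    · simp [h]
    · have hv : a.val ≠ x.val := fun hv => h (Fin.ext hv)
      simp [h, hv]

end

/-- Every element of the symmetric group `S_{n+1}` (generated by the simple
transpositions `r₁, …, r_n`) admits a reduced expression — i.e. a word of minimal length among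
all words in the generators representing it — containing at most one occurrence of the first
generator `r₁`. -/
theorem stmt6 (n : ℕ) (hn : 1 ≤ n) (σ : Equiv.Perm (Fin (n + 1))) :
    ∃ l : List (Fin n),
      (l.map (simpleTransposition n)).prod = σ ∧
      (∀ l' : List (Fin n), (l'.map (simpleTransposition n)).prod = σ →
        l.length ≤ l'.length) ∧
      l.count ⟨0, hn⟩ ≤ 1 := by
  obtain ⟨l, hprod, hlen, -, hcnt⟩ :=
    key (invCount σ) σ rfl 0 (fun x hx => absurd hx (Nat.not_lt_zero _))
  refine ⟨l, hprod, ?_, ?_⟩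
  · intro l' hl'
    have h2 := invCount_le_length l'
    rw [hl'] at h2
    omega
  · rw [count_eq_countP_val]
    exact hcnt
end

section
/- Let W(B_n) be the Weyl group of type B_n with generators r₀, …, r_{n−1}, and let ι : W(D_n) → W(B_n) be the embedding s₀ ↦ r₀r₁r₀, s_i ↦ r_i (i ≥ 1). If w ∈ ι(W(D_n)), then w admits a reduced expression (in the generators r₀, …, r_{n−1}) of the form ι(s_{i₁})⋯ι(s_{i_k}) where s_{i₁}⋯s_{i_k} is a reduced expression in W(D_n). -/
/-- `r₀`: the signed permutation of `ℤ^(n+2)` negating the first coordinate. -/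
def negFirst (n : ℕ) : Equiv.Perm (Fin (n + 2) → ℤ) :=
  Function.Involutive.toPerm
    (fun x j => if j = 0 then -x j else x j)
    (by
      intro x; funext j
      by_cases h : j = 0 <;> simp [h])

/-- The permutation of `ℤ^(n+2)` exchanging coordinates `i` and `i+1`. -/
def swapCoord (n : ℕ) (i : Fin (n + 1)) : Equiv.Perm (Fin (n + 2) → ℤ) :=
  Equiv.arrowCongr (Equiv.swap i.castSucc i.succ) (Equiv.refl ℤ)

/-- The Coxeter generators `r₀, r₁, …, r_{n+1}` of the Weyl group `W(B_{n+2})` of signed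
permutations. -/
def bGen (n : ℕ) : Fin (n + 2) → Equiv.Perm (Fin (n + 2) → ℤ) :=
  Fin.cases (negFirst n) (fun i => swapCoord n i)

/-- The images `ι(s₀) = r₀r₁r₀`, `ι(s_i) = r_i` of the Coxeter generators of `W(D_{n+2})`
under the standard embedding `ι : W(D_{n+2}) → W(B_{n+2})`. -/
def dGen (n : ℕ) : Fin (n + 2) → Equiv.Perm (Fin (n + 2) → ℤ) :=
  Fin.cases (negFirst n * swapCoord n 0 * negFirst n) (fun i => swapCoord n i)

/-- The word over the `B`-generators spelling out an image `ι(s_j)`: `ι(s₀)` expands to the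
word `r₀ r₁ r₀` and `ι(s_i) = r_i` for `i ≥ 1`. -/
def expandD (n : ℕ) : Fin (n + 2) → List (Fin (n + 2)) :=
  Fin.cases [0, 1, 0] (fun i => [i.succ])

/-
Record a signed permutation `w` by its window `v = w (1, 2, …, n)` and measure it by the
Björner–Brenti statistics `ℓ_D(v) = inv + nsp` and `ℓ_B(v) = inv + nsp + neg`. Every `r_i` raises
`ℓ_B`, and every `ι(s_i)` raises `ℓ_D`, by at most one, so these statistics bound the word lengths
from below. Conversely, descend greedily: at a descent `v (i+1) < v i`, `ι(s_{i+1}) = r_{i+1}`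
lowers both statistics by one. Without descents `v` is increasing, and on `ι(W(D_n))` it has an
even number of negative entries; so either `v` is the identity window or its first two entries are
negative, and then `ι(s₀) = r₀r₁r₀` lowers `ℓ_D` by one and `ℓ_B` by three. The resulting `D`-word
has length `ℓ_D(v)` and its expansion has length `ℓ_B(v)`.
-/

open Finset

lemma exists_list_map_prod_eq_of_mem_closure {G ι : Type*} [Group G] {g : ι → G}
    (hg : ∀ i, g i * g i = 1) {w : G} (hw : w ∈ Subgroup.closure (Set.range g)) :
    ∃ l : List ι, (l.map g).prod = w := by
  induction hw using Subgroup.closure_induction'' with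
  | mem x hx => obtain ⟨i, rfl⟩ := hx; exact ⟨[i], by simp⟩
  | inv_mem x hx =>
    obtain ⟨i, rfl⟩ := hx
    exact ⟨[i], by simp [inv_eq_of_mul_eq_one_right (hg i)]⟩
  | one => exact ⟨[], rfl⟩
  | mul x y _ _ hx hy =>
    obtain ⟨l₁, rfl⟩ := hx
    obtain ⟨l₂, rfl⟩ := hy
    exact ⟨l₁ ++ l₂, by simp⟩

section PairSum

variable {m : ℕ}

def pairSum (g : Fin m → Fin m → ℕ) : ℕ :=
  ∑ p : Fin m × Fin m, if p.1 < p.2 then g p.1 p.2 else 0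

lemma pairSum_succ (g : Fin (m + 1) → Fin (m + 1) → ℕ) :
    pairSum g = ∑ k : Fin m, g 0 k.succ + pairSum fun a b => g a.succ b.succ := by
  simp [pairSum, Fintype.sum_prod_type, Fin.sum_univ_succ, Fin.succ_pos, Fin.succ_lt_succ_iff]

lemma pairSum_comp_swap (g : Fin (m + 1) → Fin (m + 1) → ℕ) (i : Fin m) :
    (pairSum fun a b => g (Equiv.swap i.castSucc i.succ a) (Equiv.swap i.castSucc i.succ b))
      + g i.castSucc i.succ = pairSum g + g i.succ i.castSucc := by
  let s := Equiv.swap i.castSucc i.succ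
  have hreindex := Equiv.sum_comp (s.prodCongr s)
    (fun p => if s p.1 < s p.2 then g p.1 p.2 else 0)
  simp only [Equiv.prodCongr_apply, Prod.map, s, Equiv.swap_apply_self] at hreindex
  rw [pairSum, hreindex, pairSum,
    ← Fintype.sum_ite_eq' (i.castSucc, i.succ) (fun p => g p.1 p.2),
    ← Fintype.sum_ite_eq' (i.succ, i.castSucc) (fun p => g p.1 p.2),
    ← sum_add_distrib, ← sum_add_distrib]
  refine sum_congr rfl fun ⟨a, b⟩ _ => ?_
  have hi : (i.castSucc : ℕ) + 1 = i.succ := by simp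
  simp only [Equiv.swap_apply_def, Prod.mk.injEq]
  split_ifs <;> simp only [Fin.lt_def, Fin.ext_iff] at * <;> omega

end PairSum

/- For a window `v` of a signed permutation, Björner–Brenti (Combinatorics of Coxeter Groups,
Props. 8.1.1 and 8.2.1) give `ℓ_D = inv + nsp` and `ℓ_B = inv + nsp + neg`; `dWeight (v a) (v b)`
is the contribution of a pair of positions `a < b` to `inv + nsp`. -/
def dWeight (x y : ℤ) : ℕ := (if y < x then 1 else 0) + (if x + y < 0 then 1 else 0)

lemma dWeight_neg_left (x y : ℤ) : dWeight (-x) y = dWeight x y := by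
  simp only [dWeight]; split_ifs <;> omega

lemma dWeight_add_ite_lt (x y : ℤ) :
    dWeight x y + (if x < y then 1 else 0) = dWeight y x + (if y < x then 1 else 0) := by
  simp only [dWeight]; split_ifs <;> omega

lemma dWeight_eq_zero {x y : ℤ} (hxy : x < y) (hx : 0 < x) : dWeight x y = 0 := by
  simp only [dWeight]; split_ifs <;> omega

section Window

variable {m : ℕ}

def lengthD (v : Fin m → ℤ) : ℕ := pairSum fun a b => dWeight (v a) (v b)

def negCount (v : Fin m → ℤ) : ℕ := ∑ j, if v j < 0 then 1 else 0

def lengthB (v : Fin m → ℤ) : ℕ := lengthD v + negCount v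

def signProd (v : Fin m → ℤ) : ℤ := ∏ j, (v j).sign

def window (w : Equiv.Perm (Fin m → ℤ)) : Fin m → ℤ := w fun j => (j : ℤ) + 1

lemma window_mul (g w : Equiv.Perm (Fin m → ℤ)) : window (g * w) = g (window w) := rfl

lemma window_one_apply (j : Fin m) : window (1 : Equiv.Perm (Fin m → ℤ)) j = j + 1 := rfl

lemma lengthD_window_one : lengthD (window (1 : Equiv.Perm (Fin m → ℤ))) = 0 :=
  sum_eq_zero fun p _ => ite_eq_right_iff.2 fun h => by
    rw [Fin.lt_def] at h
    exact dWeight_eq_zero (by simp only [window_one_apply]; omega)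
      (by simp only [window_one_apply]; omega)

lemma lengthB_window_one : lengthB (window (1 : Equiv.Perm (Fin m → ℤ))) = 0 := by
  rw [lengthB, lengthD_window_one, zero_add]
  exact sum_eq_zero fun j _ => if_neg (by rw [window_one_apply]; omega)

lemma signProd_window_one : signProd (window (1 : Equiv.Perm (Fin m → ℤ))) = 1 :=
  prod_eq_one fun j _ => Int.sign_eq_one_of_pos (by rw [window_one_apply]; omega)

lemma apply_window_list_prod_le {ι : Type*} (f : (Fin m → ℤ) → ℕ)
    (g : ι → Equiv.Perm (Fin m → ℤ)) (hf : ∀ i v, f (g i v) ≤ f v + 1) (L : List ι) :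
    f (window (L.map g).prod) ≤ f (window 1) + L.length := by
  induction L with
  | nil => simp
  | cons i L ih =>
    rw [List.map_cons, List.prod_cons, window_mul, List.length_cons]
    exact (hf i _).trans (by omega)

end Window

section Generators

variable {n : ℕ}

lemma negFirst_apply (x : Fin (n + 2) → ℤ) (j : Fin (n + 2)) :
    negFirst n x j = if j = 0 then -x j else x j := rfl

lemma negFirst_apply_zero (x : Fin (n + 2) → ℤ) : negFirst n x 0 = -x 0 := by
  rw [negFirst_apply, if_pos rfl]

lemma negFirst_apply_succ (x : Fin (n + 2) → ℤ) (k : Fin (n + 1)) :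
    negFirst n x k.succ = x k.succ := by
  rw [negFirst_apply, if_neg k.succ_ne_zero]

lemma swapCoord_apply (i : Fin (n + 1)) (x : Fin (n + 2) → ℤ) (j : Fin (n + 2)) :
    swapCoord n i x j = x (Equiv.swap i.castSucc i.succ j) := rfl

lemma dGen_zero_apply (x : Fin (n + 2) → ℤ) :
    dGen n 0 x = negFirst n (swapCoord n 0 (negFirst n x)) := rfl

lemma dGen_succ (i : Fin (n + 1)) : dGen n i.succ = swapCoord n i := rfl

lemma bGen_zero : bGen n 0 = negFirst n := rfl

lemma bGen_succ (i : Fin (n + 1)) : bGen n i.succ = swapCoord n i := rfl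

lemma bGen_one : bGen n 1 = swapCoord n 0 := rfl

lemma negFirst_mul_self : negFirst n * negFirst n = 1 :=
  Equiv.ext fun x => funext fun j => by
    simp only [Equiv.Perm.mul_apply, negFirst_apply]; split_ifs <;> simp

lemma swapCoord_mul_self (i : Fin (n + 1)) : swapCoord n i * swapCoord n i = 1 :=
  Equiv.ext fun x => funext fun j => by
    simp only [Equiv.Perm.mul_apply, swapCoord_apply, Equiv.swap_apply_self]; rfl

lemma dGen_mul_self (i : Fin (n + 2)) : dGen n i * dGen n i = 1 := by
  cases i using Fin.cases with
  | zero =>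
    change negFirst n * swapCoord n 0 * negFirst n * (negFirst n * swapCoord n 0 * negFirst n) = 1
    simp only [mul_assoc]
    rw [← mul_assoc (negFirst n) (negFirst n), negFirst_mul_self, one_mul,
      ← mul_assoc (swapCoord n 0), swapCoord_mul_self, one_mul, negFirst_mul_self]
  | succ i => exact swapCoord_mul_self i

lemma prod_map_bGen_expandD (i : Fin (n + 2)) : ((expandD n i).map (bGen n)).prod = dGen n i := by
  cases i using Fin.cases <;> simp [expandD, bGen_zero, bGen_one, bGen_succ, dGen, mul_assoc]

lemma prod_map_bGen_flatMap_expandD (l : List (Fin (n + 2))) :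
    ((l.flatMap (expandD n)).map (bGen n)).prod = (l.map (dGen n)).prod := by
  induction l with
  | nil => rfl
  | cons i l ih => simp [List.flatMap_cons, prod_map_bGen_expandD, ih]

lemma lengthD_negFirst (v : Fin (n + 2) → ℤ) : lengthD (negFirst n v) = lengthD v := by
  simp [lengthD, pairSum_succ (m := n + 1), negFirst_apply, Fin.succ_ne_zero, dWeight_neg_left]

lemma negCount_negFirst (v : Fin (n + 2) → ℤ) :
    negCount (negFirst n v) + (if v 0 < 0 then 1 else 0)
      = negCount v + (if 0 < v 0 then 1 else 0) := by
  simp only [negCount, Fin.sum_univ_succ, negFirst_apply_zero, negFirst_apply_succ]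
  split_ifs <;> omega

lemma signProd_negFirst (v : Fin (n + 2) → ℤ) : signProd (negFirst n v) = -signProd v := by
  simp only [signProd, Fin.prod_univ_succ, negFirst_apply_zero, negFirst_apply_succ, Int.sign_neg,
    neg_mul]

lemma lengthD_swapCoord (i : Fin (n + 1)) (v : Fin (n + 2) → ℤ) :
    lengthD (swapCoord n i v) + (if v i.succ < v i.castSucc then 1 else 0)
      = lengthD v + (if v i.castSucc < v i.succ then 1 else 0) := by
  have hswap : (pairSum fun a b : Fin (n + 2) =>
      dWeight (v (Equiv.swap i.castSucc i.succ a)) (v (Equiv.swap i.castSucc i.succ b)))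
      + dWeight (v i.castSucc) (v i.succ) = lengthD v + dWeight (v i.succ) (v i.castSucc) :=
    pairSum_comp_swap (fun a b => dWeight (v a) (v b)) i
  have hweight := dWeight_add_ite_lt (v i.castSucc) (v i.succ)
  simp only [lengthD, swapCoord_apply] at hswap ⊢
  omega

lemma negCount_swapCoord (i : Fin (n + 1)) (v : Fin (n + 2) → ℤ) :
    negCount (swapCoord n i v) = negCount v :=
  Equiv.sum_comp (Equiv.swap i.castSucc i.succ) fun j => if v j < 0 then 1 else 0

lemma signProd_swapCoord (i : Fin (n + 1)) (v : Fin (n + 2) → ℤ) :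
    signProd (swapCoord n i v) = signProd v :=
  Equiv.prod_comp (Equiv.swap i.castSucc i.succ) fun j => (v j).sign

lemma lengthD_dGen_zero (v : Fin (n + 2) → ℤ) :
    lengthD (dGen n 0 v) + (if v 0 + v 1 < 0 then 1 else 0)
      = lengthD v + (if 0 < v 0 + v 1 then 1 else 0) := by
  have h := lengthD_swapCoord 0 (negFirst n v)
  rw [Fin.castSucc_zero, negFirst_apply_zero, negFirst_apply_succ, Fin.succ_zero_eq_one,
    lengthD_negFirst] at h
  rw [dGen_zero_apply, lengthD_negFirst]
  split_ifs at h ⊢ <;> omega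

lemma negCount_dGen_zero (v : Fin (n + 2) → ℤ) :
    negCount (dGen n 0 v) + ((if v 0 < 0 then 1 else 0) + (if v 1 < 0 then 1 else 0))
      = negCount v + ((if 0 < v 0 then 1 else 0) + (if 0 < v 1 then 1 else 0)) := by
  have h₁ := negCount_negFirst (swapCoord n 0 (negFirst n v))
  have h₂ := negCount_negFirst v
  rw [negCount_swapCoord, swapCoord_apply, Fin.castSucc_zero, Equiv.swap_apply_left,
    negFirst_apply_succ, Fin.succ_zero_eq_one] at h₁
  rw [dGen_zero_apply]
  omega

lemma signProd_dGen (i : Fin (n + 2)) (v : Fin (n + 2) → ℤ) :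
    signProd (dGen n i v) = signProd v := by
  cases i using Fin.cases with
  | zero => rw [dGen_zero_apply, signProd_negFirst, signProd_swapCoord, signProd_negFirst, neg_neg]
  | succ i => rw [dGen_succ, signProd_swapCoord]

lemma lengthD_dGen_le (i : Fin (n + 2)) (v : Fin (n + 2) → ℤ) :
    lengthD (dGen n i v) ≤ lengthD v + 1 := by
  cases i using Fin.cases with
  | zero => have h := lengthD_dGen_zero v; split_ifs at h <;> omega
  | succ i => have h := lengthD_swapCoord i v; rw [dGen_succ]; split_ifs at h <;> omega

lemma lengthB_bGen_le (i : Fin (n + 2)) (v : Fin (n + 2) → ℤ) :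
    lengthB (bGen n i v) ≤ lengthB v + 1 := by
  cases i using Fin.cases with
  | zero =>
    have h := negCount_negFirst v
    rw [bGen_zero, lengthB, lengthB, lengthD_negFirst]
    split_ifs at h <;> omega
  | succ i =>
    have h := lengthD_swapCoord i v
    rw [bGen_succ, lengthB, lengthB, negCount_swapCoord]
    split_ifs at h <;> omega

lemma signProd_window_dGen_prod (l : List (Fin (n + 2))) :
    signProd (window (l.map (dGen n)).prod) = 1 := by
  induction l with
  | nil => exact signProd_window_one
  | cons i l ih => rw [List.map_cons, List.prod_cons, window_mul, signProd_dGen, ih]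

end Generators

def signedPerms (m : ℕ) : Submonoid (Equiv.Perm (Fin m → ℤ)) where
  carrier := {w | ∃ (σ : Equiv.Perm (Fin m)) (ε : Fin m → ℤˣ), ∀ x j, w x j = ε j * x (σ j)}
  mul_mem' := by
    rintro g w ⟨σ, ε, hg⟩ ⟨τ, δ, hw⟩
    exact ⟨σ.trans τ, fun j => ε j * δ (σ j), fun x j => by
      simp [Equiv.Perm.mul_apply, hg, hw, mul_assoc]⟩
  one_mem' := ⟨1, 1, fun x j => by simp⟩

section SignedPerms

variable {m : ℕ}

lemma exists_abs_window_eq {w : Equiv.Perm (Fin m → ℤ)} (hw : w ∈ signedPerms m) :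
    ∃ σ : Equiv.Perm (Fin m), ∀ j, |window w j| = σ j + 1 := by
  obtain ⟨σ, ε, hw⟩ := hw
  refine ⟨σ, fun j => ?_⟩
  rw [window, hw]
  rcases Int.units_eq_one_or (ε j) with h | h <;>
    simp only [h, Units.val_one, Units.val_neg, one_mul, neg_one_mul, abs_neg] <;>
    exact abs_of_nonneg (by positivity)

lemma eq_one_of_window_eq {w : Equiv.Perm (Fin m → ℤ)} (hw : w ∈ signedPerms m)
    (h : window w = window 1) : w = 1 := by
  obtain ⟨σ, ε, hw⟩ := hw
  have hσε : ∀ j, σ j = j ∧ ε j = 1 := fun j => by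
    have hj := congrFun h j
    rw [window, hw, window_one_apply] at hj
    rcases Int.units_eq_one_or (ε j) with he | he <;> simp only [he, Units.val_one,
      Units.val_neg, one_mul, neg_one_mul] at hj
    · exact ⟨Fin.ext (by omega), he⟩
    · omega
  exact Equiv.ext fun x => funext fun j => by simp [hw, hσε]

lemma window_eq_window_one_of_strictMono {v : Fin m → ℤ} {σ : Equiv.Perm (Fin m)}
    (habs : ∀ j, |v j| = σ j + 1) (hmono : StrictMono v) (hpos : ∀ j, 0 < v j) :
    v = window 1 := by
  have hv : ∀ j, v j = σ j + 1 := fun j => by rw [← habs, abs_of_pos (hpos j)]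
  have hσ : StrictMono σ := fun a b hab => by
    have := hmono hab
    rw [hv, hv] at this
    exact Fin.lt_def.2 (by omega)
  funext j
  rw [hv, window_one_apply, congrFun hσ.eq_id j, id]

end SignedPerms

lemma zero_lt_of_signProd_eq_one {m : ℕ} {v : Fin (m + 2) → ℤ} (hmono : StrictMono v)
    (hsign : signProd v = 1) (h₀ : v 0 ≠ 0) (h₁ : 0 < v 1) : 0 < v 0 := by
  by_contra hneg
  have htail : ∀ k : Fin (m + 1), (v k.succ).sign = 1 := fun k =>
    Int.sign_eq_one_of_pos (h₁.trans_le (hmono.monotone (by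
      rw [← Fin.succ_zero_eq_one, Fin.succ_le_succ_iff]; exact Fin.zero_le k)))
  rw [signProd, Fin.prod_univ_succ, prod_eq_one fun k _ => htail k, mul_one,
    Int.sign_eq_neg_one_of_neg (by omega)] at hsign
  exact absurd hsign (by decide)

lemma strictMono_of_abs_eq {m : ℕ} {v : Fin (m + 1) → ℤ} {σ : Equiv.Perm (Fin (m + 1))}
    (habs : ∀ j, |v j| = σ j + 1) (hasc : ∀ i : Fin m, v i.castSucc ≤ v i.succ) :
    StrictMono v :=
  Fin.strictMono_iff_lt_succ.2 fun i => (hasc i).lt_of_ne fun h =>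
    i.castSucc_lt_succ.ne (σ.injective (Fin.ext (by
      have := habs i.castSucc; have := habs i.succ; rw [h] at *; omega)))

lemma eq_window_one_or_of_abs_eq {m : ℕ} {v : Fin (m + 2) → ℤ} {σ : Equiv.Perm (Fin (m + 2))}
    (habs : ∀ j, |v j| = σ j + 1) (hmono : StrictMono v) (hsign : signProd v = 1) :
    v = window 1 ∨ v 0 < 0 ∧ v 1 < 0 := by
  have hne : ∀ j, v j ≠ 0 := fun j h => by have := habs j; rw [h, abs_zero] at this; omega
  rcases (hne 1).lt_or_gt with h₁ | h₁
  · exact Or.inr ⟨(hmono Fin.zero_lt_one).trans h₁, h₁⟩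
  · have h₀ := zero_lt_of_signProd_eq_one hmono hsign (hne 0) h₁
    exact Or.inl (window_eq_window_one_of_strictMono habs hmono
      fun j => h₀.trans_le (hmono.monotone (Fin.zero_le j)))

section Construction

variable {n : ℕ}

lemma negFirst_mem_signedPerms : negFirst n ∈ signedPerms (n + 2) :=
  ⟨1, fun j => if j = 0 then -1 else 1, fun x j => by
    rw [negFirst_apply]; split_ifs with h <;> simp [h]⟩

lemma swapCoord_mem_signedPerms (i : Fin (n + 1)) : swapCoord n i ∈ signedPerms (n + 2) :=
  ⟨Equiv.swap i.castSucc i.succ, 1, fun x j => by simp [swapCoord_apply]⟩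

lemma dGen_mem_signedPerms (i : Fin (n + 2)) : dGen n i ∈ signedPerms (n + 2) := by
  cases i using Fin.cases with
  | zero =>
    exact mul_mem (mul_mem negFirst_mem_signedPerms (swapCoord_mem_signedPerms 0))
      negFirst_mem_signedPerms
  | succ i => exact swapCoord_mem_signedPerms i

lemma length_flatMap_expandD_cons (i : Fin (n + 2)) (l : List (Fin (n + 2))) :
    ((i :: l).flatMap (expandD n)).length
      = (l.flatMap (expandD n)).length + if i = 0 then 3 else 1 := by
  cases i using Fin.cases <;> simp [expandD, Fin.succ_ne_zero]

theorem exists_dGen_list_of_mem_signedPerms {w : Equiv.Perm (Fin (n + 2) → ℤ)} {v : Fin (n + 2) → ℤ}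
    (hw : w ∈ signedPerms (n + 2)) (hv : window w = v) (hsign : signProd v = 1) :
    ∃ l : List (Fin (n + 2)), (l.map (dGen n)).prod = w ∧
      l.length = lengthD v ∧ (l.flatMap (expandD n)).length = lengthB v := by
  induction hk : lengthD v using Nat.strong_induction_on generalizing w v with
  | _ k ih =>
  obtain ⟨σ, habs⟩ := exists_abs_window_eq hw
  rw [hv] at habs
  by_cases hdesc : ∃ i : Fin (n + 1), v i.succ < v i.castSucc
  · obtain ⟨i, hi⟩ := hdesc
    have hD := lengthD_swapCoord i v
    rw [if_pos hi, if_neg (lt_asymm hi)] at hD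
    obtain ⟨l, hl, hlD, hlB⟩ := ih _ (by omega) (v := swapCoord n i v)
      (mul_mem (swapCoord_mem_signedPerms i) hw)
      (by rw [window_mul, hv]) (by rw [signProd_swapCoord, hsign]) rfl
    refine ⟨i.succ :: l, ?_, ?_, ?_⟩
    · rw [List.map_cons, List.prod_cons, hl, dGen_succ, ← mul_assoc, swapCoord_mul_self, one_mul]
    · rw [List.length_cons, hlD]; omega
    · rw [length_flatMap_expandD_cons, if_neg i.succ_ne_zero, hlB, lengthB, lengthB,
        negCount_swapCoord]
      omega
  simp only [not_exists, not_lt] at hdesc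
  rcases eq_window_one_or_of_abs_eq habs (strictMono_of_abs_eq habs hdesc) hsign
    with hone | ⟨h₀, h₁⟩
  · refine ⟨[], (eq_one_of_window_eq hw (hv.trans hone)).symm, ?_, ?_⟩
    · rw [← hk, hone, lengthD_window_one]; rfl
    · rw [hone, lengthB_window_one]; rfl
  · have hD := lengthD_dGen_zero v
    have hN := negCount_dGen_zero v
    rw [if_pos (by omega), if_neg (by omega)] at hD
    rw [if_pos h₀, if_pos h₁, if_neg (by omega), if_neg (by omega)] at hN
    obtain ⟨l, hl, hlD, hlB⟩ := ih _ (by omega) (v := dGen n 0 v)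
      (mul_mem (dGen_mem_signedPerms 0) hw) (by rw [window_mul, hv])
      (by rw [signProd_dGen, hsign]) rfl
    refine ⟨0 :: l, ?_, ?_, ?_⟩
    · rw [List.map_cons, List.prod_cons, hl, ← mul_assoc, dGen_mul_self, one_mul]
    · rw [List.length_cons, hlD]; omega
    · rw [length_flatMap_expandD_cons, if_pos rfl, hlB, lengthB, lengthB]; omega

end Construction

/-- If `w` lies in the image `ι(W(D_n))` inside `W(B_n)`, then `w` admits a
reduced expression in the generators `r₀, …, r_{n-1}` of the form `ι(s_{i₁})⋯ι(s_{i_k})`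
where `s_{i₁}⋯s_{i_k}` is a reduced expression in `W(D_n)`.  (Reduced means of minimal length
among all words in the respective generators representing `w`.) -/
theorem stmt7 (n : ℕ) (w : Equiv.Perm (Fin (n + 2) → ℤ))
    (hw : w ∈ Subgroup.closure (Set.range (dGen n))) :
    ∃ l : List (Fin (n + 2)),
      -- `l` is a word in the `D`-generators representing `w`
      (l.map (dGen n)).prod = w ∧
      -- `l` is reduced in `W(D_n)`
      (∀ l' : List (Fin (n + 2)), (l'.map (dGen n)).prod = w → l.length ≤ l'.length) ∧
      -- the expanded word `ι(s_{i₁})⋯ι(s_{i_k})` represents `w` in the `B`-generators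
      (((l.flatMap (expandD n)).map (bGen n)).prod = w) ∧
      -- and is reduced in `W(B_n)`
      (∀ L : List (Fin (n + 2)), (L.map (bGen n)).prod = w →
        (l.flatMap (expandD n)).length ≤ L.length) := by
  obtain ⟨l₀, rfl⟩ := exists_list_map_prod_eq_of_mem_closure dGen_mul_self hw
  have hsigned : (l₀.map (dGen n)).prod ∈ signedPerms (n + 2) :=
    list_prod_mem fun g hg => by
      obtain ⟨i, -, rfl⟩ := List.mem_map.1 hg
      exact dGen_mem_signedPerms i
  obtain ⟨l, hl, hlD, hlB⟩ :=
    exists_dGen_list_of_mem_signedPerms hsigned rfl (signProd_window_dGen_prod l₀)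
  refine ⟨l, hl, fun l' hl' => ?_, by rw [prod_map_bGen_flatMap_expandD, hl], fun L hL => ?_⟩
  · have := apply_window_list_prod_le lengthD (dGen n) lengthD_dGen_le l'
    rw [hl', lengthD_window_one] at this
    omega
  · have := apply_window_list_prod_le lengthB (bGen n) lengthB_bGen_le L
    rw [hL, lengthB_window_one] at this
    omega
end
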